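/- The flip operation j on W₁([0,1]), defined by declaring the cumulative distribution function of j(μ) to be the quantile function of μ (i.e. F_{j(μ)} = F_μ⁻¹), is a surjective isometry of W₁([0,1]) of order two, and it satisfies j(δ_t) = t·δ₀ + (1−t)·δ₁ for all t ∈ [0,1]; in particular j does not map all Dirac masses to Dirac masses. -/

import Mathlib

open MeasureTheory Set

noncomputable section

/-- Cumulative distribution function of a measure on `[0,1]`: `F_μ(x) = μ([0,x])`. -/
def cdfI (μ : Measure ℝ) (x : ℝ) : ℝ := (μ (Set.Icc 0 x)).toReal

/-- Quantile function (right-continuous generalized inverse of the CDF). -/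
def quantI (μ : Measure ℝ) (t : ℝ) : ℝ := sSup {x : ℝ | cdfI μ x ≤ t}

/-- The Wasserstein space over `[0,1]`, realized as the set of Borel probability
measures on `ℝ` concentrated on `[0,1]`. -/
def P01 : Set (Measure ℝ) := {μ | IsProbabilityMeasure μ ∧ μ (Set.Icc 0 1) = 1}

/-- Vallender's formula for the 1-Wasserstein distance on `[0,1]`. -/
def dW1I (μ ν : Measure ℝ) : ℝ := ∫ x in (0:ℝ)..1, |cdfI μ x - cdfI ν x|

/-!
A measure in `P01` is determined by its CDF `F`, which is nondecreasing, right-continuous,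
vanishes on `(-∞, 0)` and equals `1` on `[1, ∞)`; conversely every such `F` is the CDF of a
Stieltjes measure in `P01`. The generalized inverse `F⁻¹(t) = sup {x | F x ≤ t}` (set to `1`
for `t ≥ 1`) is again such a function, and `(F⁻¹)⁻¹ = F` because `{x | F⁻¹ x ≤ t}` lies
between `(-∞, F t)` and `(-∞, F t]`, the upper inclusion by right continuity of `F`. So `j`
is an involution of `P01`.

For the isometry, the region `{(x, u) | F x ≤ u < G x}` has vertical slices `[F x, G x)` and
horizontal slices squeezed between `(G⁻¹ u, F⁻¹ u)` and `[G⁻¹ u, F⁻¹ u]`, so by Fubini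
`∫ (G - F)⁺ = ∫ (F⁻¹ - G⁻¹)⁺`; adding the same identity with `F`, `G` swapped gives
`∫ |F - G| = ∫ |F⁻¹ - G⁻¹|`.

The CDF of `δ_t` is the indicator of `[t, ∞)`, whose inverse is constantly `t` on `[0, 1)`, the
CDF of `t δ₀ + (1 - t) δ₁` there; at `t = 1/2` this is not `{0, 1}`-valued as a Dirac CDF is.
-/

open Filter Topology ProbabilityTheory

theorem Monotone.continuousWithinAt_Ici_of_exists_gt {α β : Type*} [LinearOrder α]
    [TopologicalSpace α] [OrderTopology α] [LinearOrder β] [TopologicalSpace β] [OrderTopology β]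
    {f : α → β} {a : α} (hf : Monotone f) (h : ∀ b > f a, ∃ c > a, f c < b) :
    ContinuousWithinAt f (Ici a) a := by
  refine tendsto_order.2 ⟨fun b hb => ?_, fun b hb => ?_⟩
  · filter_upwards [self_mem_nhdsWithin] with x hx using hb.trans_le (hf hx)
  · obtain ⟨c, hac, hcb⟩ := h b hb
    filter_upwards [Ico_mem_nhdsGE hac] with x hx using (hf hx.2.le).trans_lt hcb

theorem ENNReal.ofReal_abs_sub (a b : ℝ) :
    ENNReal.ofReal |a - b| = ENNReal.ofReal (a - b) + ENNReal.ofReal (b - a) := by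
  rcases le_total a b with h | h
  · rw [abs_of_nonpos (sub_nonpos.2 h), neg_sub, ENNReal.ofReal_of_nonpos (sub_nonpos.2 h),
      zero_add]
  · rw [abs_of_nonneg (sub_nonneg.2 h), ENNReal.ofReal_of_nonpos (sub_nonpos.2 h), add_zero]

structure IsCDF01 (F : ℝ → ℝ) : Prop where
  mono : Monotone F
  continuousWithinAt_Ici : ∀ x, ContinuousWithinAt F (Ici x) x
  eq_zero_of_neg : ∀ x < 0, F x = 0
  eq_one_of_one_le : ∀ x, 1 ≤ x → F x = 1

/-- The right-continuous generalized inverse of `F`; on `[1, ∞)` the supremum would be over an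
unbounded set (junk value `0`), so it is set to `1` there. -/
def cdfFlip (F : ℝ → ℝ) (t : ℝ) : ℝ := if t < 1 then sSup {x | F x ≤ t} else 1

theorem cdfFlip_of_lt_one {F : ℝ → ℝ} {t : ℝ} (ht : t < 1) : cdfFlip F t = sSup {x | F x ≤ t} :=
  if_pos ht

theorem cdfFlip_of_one_le {F : ℝ → ℝ} {t : ℝ} (ht : 1 ≤ t) : cdfFlip F t = 1 :=
  if_neg ht.not_gt

namespace IsCDF01

variable {F G : ℝ → ℝ} {x t : ℝ}

theorem nonneg (hF : IsCDF01 F) (x : ℝ) : 0 ≤ F x :=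
  calc 0 = F (min x (-1)) := (hF.eq_zero_of_neg _ (by simp)).symm
    _ ≤ F x := hF.mono (min_le_left _ _)

theorem le_one (hF : IsCDF01 F) (x : ℝ) : F x ≤ 1 :=
  calc F x ≤ F (max x 1) := hF.mono (le_max_left _ _)
    _ = 1 := hF.eq_one_of_one_le _ (le_max_right _ _)

theorem ext_of_eqOn (hF : IsCDF01 F) (hG : IsCDF01 G) (h : EqOn F G (Ico 0 1)) : F = G := by
  funext x
  rcases lt_or_ge x 0 with hx0 | hx0
  · rw [hF.eq_zero_of_neg x hx0, hG.eq_zero_of_neg x hx0]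
  rcases lt_or_ge x 1 with hx1 | hx1
  · exact h ⟨hx0, hx1⟩
  · rw [hF.eq_one_of_one_le x hx1, hG.eq_one_of_one_le x hx1]

theorem tendsto_atBot (hF : IsCDF01 F) : Tendsto F atBot (𝓝 0) :=
  tendsto_const_nhds.congr' <| by
    filter_upwards [eventually_lt_atBot 0] with x hx using (hF.eq_zero_of_neg x hx).symm

theorem tendsto_atTop (hF : IsCDF01 F) : Tendsto F atTop (𝓝 1) :=
  tendsto_const_nhds.congr' <| by
    filter_upwards [eventually_ge_atTop 1] with x hx using (hF.eq_one_of_one_le x hx).symm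

theorem leftLim_zero (hF : IsCDF01 F) : Function.leftLim F 0 = 0 :=
  leftLim_eq_of_tendsto <| tendsto_const_nhds.congr' <| by
    filter_upwards [self_mem_nhdsWithin] with x hx using (hF.eq_zero_of_neg x hx).symm

theorem cdfFlip_of_neg (hF : IsCDF01 F) (ht : t < 0) : cdfFlip F t = 0 := by
  have hempty : {x | F x ≤ t} = ∅ :=
    eq_empty_of_forall_notMem fun x hx => (ht.trans_le (hF.nonneg x)).not_ge hx
  rw [cdfFlip_of_lt_one (ht.trans one_pos), hempty, Real.sSup_empty]

theorem le_cdfFlip_of_le (hF : IsCDF01 F) (ht : t < 1) (h : F x ≤ t) : x ≤ cdfFlip F t := by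
  have hbdd : BddAbove {x | F x ≤ t} := ⟨1, fun y hy => by
    by_contra! hy1
    exact ((hF.eq_one_of_one_le y hy1.le).symm.trans_le hy).not_gt ht⟩
  rw [cdfFlip_of_lt_one ht]
  exact le_csSup hbdd h

theorem le_of_lt_cdfFlip (hF : IsCDF01 F) (ht : 0 ≤ t) (h : x < cdfFlip F t) : F x ≤ t := by
  rcases lt_or_ge t 1 with ht1 | ht1
  · rw [cdfFlip_of_lt_one ht1] at h
    obtain ⟨y, hy, hxy⟩ := exists_lt_of_lt_csSup ⟨-1, by simp [hF.eq_zero_of_neg, ht]⟩ h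
    exact (hF.mono hxy.le).trans hy
  · exact (hF.le_one x).trans ht1

theorem cdfFlip_le_of_lt (hF : IsCDF01 F) (ht : 0 ≤ t) (h : t < F x) : cdfFlip F t ≤ x :=
  not_lt.1 fun h' => (hF.le_of_lt_cdfFlip ht h').not_gt h

theorem lt_of_cdfFlip_lt (hF : IsCDF01 F) (ht : t < 1) (h : cdfFlip F t < x) : t < F x :=
  not_le.1 fun h' => (hF.le_cdfFlip_of_le ht h').not_gt h

theorem lt_cdfFlip_of_lt (hF : IsCDF01 F) (ht : t < 1) (h : F t < x) : t < cdfFlip F x := by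
  rcases lt_or_ge x 1 with hx1 | hx1
  · have hev : ∀ᶠ t' in 𝓝[>] t, F t' < x :=
      ((hF.continuousWithinAt_Ici t).eventually (gt_mem_nhds h)).filter_mono
        (nhdsWithin_mono _ Ioi_subset_Ici_self)
    obtain ⟨t', hFt', ht'⟩ := (hev.and self_mem_nhdsWithin).exists
    exact ht'.trans_le (hF.le_cdfFlip_of_le hx1 hFt'.le)
  · rwa [cdfFlip_of_one_le hx1]

theorem cdfFlip_nonneg (hF : IsCDF01 F) (t : ℝ) : 0 ≤ cdfFlip F t := by
  rcases lt_or_ge t 0 with ht0 | ht0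
  · exact (hF.cdfFlip_of_neg ht0).ge
  rcases lt_or_ge t 1 with ht1 | ht1
  · exact le_of_forall_lt_imp_le_of_dense fun x hx =>
      hF.le_cdfFlip_of_le ht1 ((hF.eq_zero_of_neg x hx).trans_le ht0)
  · rw [cdfFlip_of_one_le ht1]; exact zero_le_one

theorem cdfFlip_le_one (hF : IsCDF01 F) (t : ℝ) : cdfFlip F t ≤ 1 := by
  rcases lt_or_ge t 0 with ht0 | ht0
  · rw [hF.cdfFlip_of_neg ht0]; exact zero_le_one
  rcases lt_or_ge t 1 with ht1 | ht1
  · exact hF.cdfFlip_le_of_lt ht0 (by rwa [hF.eq_one_of_one_le 1 le_rfl])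
  · rw [cdfFlip_of_one_le ht1]

theorem monotone_cdfFlip (hF : IsCDF01 F) : Monotone (cdfFlip F) := by
  intro a b hab
  rcases lt_or_ge a 0 with ha0 | ha0
  · rw [hF.cdfFlip_of_neg ha0]; exact hF.cdfFlip_nonneg b
  rcases lt_or_ge b 1 with hb1 | hb1
  · exact le_of_forall_lt_imp_le_of_dense fun x hx =>
      hF.le_cdfFlip_of_le hb1 ((hF.le_of_lt_cdfFlip ha0 hx).trans hab)
  · rw [cdfFlip_of_one_le hb1]; exact hF.cdfFlip_le_one a

theorem flip (hF : IsCDF01 F) : IsCDF01 (cdfFlip F) where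
  mono := hF.monotone_cdfFlip
  continuousWithinAt_Ici a := by
    refine hF.monotone_cdfFlip.continuousWithinAt_Ici_of_exists_gt fun b hb => ?_
    rcases lt_or_ge a 0 with ha0 | ha0
    · refine ⟨a / 2, by linarith, ?_⟩
      rwa [hF.cdfFlip_of_neg (by linarith), ← hF.cdfFlip_of_neg ha0]
    rcases lt_or_ge a 1 with ha1 | ha1
    · obtain ⟨z, hz, hzb⟩ := exists_between hb
      obtain ⟨c, hac, hc⟩ := exists_between (lt_min (hF.lt_of_cdfFlip_lt ha1 hz) ha1)
      have hcz : c < F z := hc.trans_le (min_le_left _ _)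
      exact ⟨c, hac, (hF.cdfFlip_le_of_lt (ha0.trans hac.le) hcz).trans_lt hzb⟩
    · refine ⟨a + 1, by linarith, ?_⟩
      rwa [cdfFlip_of_one_le (by linarith), ← cdfFlip_of_one_le (F := F) ha1]
  eq_zero_of_neg _ := hF.cdfFlip_of_neg
  eq_one_of_one_le _ := cdfFlip_of_one_le

theorem cdfFlip_cdfFlip (hF : IsCDF01 F) : cdfFlip (cdfFlip F) = F := by
  refine hF.flip.flip.ext_of_eqOn hF fun t ⟨ht0, ht1⟩ => ?_
  have hub : ∀ x ∈ {x | cdfFlip F x ≤ t}, x ≤ F t := fun x hx =>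
    not_lt.1 fun h => (hF.lt_cdfFlip_of_lt ht1 h).not_ge hx
  have hlow : ∀ x < F t, cdfFlip F x ≤ t := fun x hx => by
    rcases lt_or_ge x 0 with hx0 | hx0
    · rw [hF.cdfFlip_of_neg hx0]; exact ht0
    · exact hF.cdfFlip_le_of_lt hx0 hx
  rw [cdfFlip_of_lt_one ht1]
  exact le_antisymm (csSup_le ⟨-1, hlow _ ((neg_one_lt_zero).trans_le (hF.nonneg t))⟩ hub)
    (le_of_forall_lt_imp_le_of_dense fun x hx => le_csSup ⟨F t, hub⟩ (hlow x hx))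

theorem volume_setOf_le_lt (hF : IsCDF01 F) (hG : IsCDF01 G) (u : ℝ) :
    volume {x | F x ≤ u ∧ u < G x} = ENNReal.ofReal (cdfFlip F u - cdfFlip G u) := by
  rcases lt_or_ge u 0 with hu0 | hu0
  · rw [hF.cdfFlip_of_neg hu0, hG.cdfFlip_of_neg hu0, sub_self, ENNReal.ofReal_zero]
    exact measure_mono_null (fun x hx => (hu0.trans_le (hF.nonneg x)).not_ge hx.1) measure_empty
  rcases lt_or_ge u 1 with hu1 | hu1
  · have hsub : {x | F x ≤ u ∧ u < G x} ⊆ Icc (cdfFlip G u) (cdfFlip F u) := fun x hx =>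
      ⟨hG.cdfFlip_le_of_lt hu0 hx.2, hF.le_cdfFlip_of_le hu1 hx.1⟩
    have hsup : Ioo (cdfFlip G u) (cdfFlip F u) ⊆ {x | F x ≤ u ∧ u < G x} := fun x hx =>
      ⟨hF.le_of_lt_cdfFlip hu0 hx.2, hG.lt_of_cdfFlip_lt hu1 hx.1⟩
    refine le_antisymm ?_ ?_
    · simpa using measure_mono (μ := volume) hsub
    · simpa using measure_mono (μ := volume) hsup
  · rw [cdfFlip_of_one_le hu1, cdfFlip_of_one_le hu1, sub_self, ENNReal.ofReal_zero]
    exact measure_mono_null (fun x hx => (hu1.trans_lt hx.2).not_ge (hG.le_one x)) measure_empty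

theorem lintegral_ofReal_sub_cdfFlip (hF : IsCDF01 F) (hG : IsCDF01 G) :
    ∫⁻ u, ENNReal.ofReal (cdfFlip F u - cdfFlip G u) = ∫⁻ x, ENNReal.ofReal (G x - F x) := by
  set A : Set (ℝ × ℝ) := {p | F p.1 ≤ p.2 ∧ p.2 < G p.1}
  have hA : MeasurableSet A :=
    (measurableSet_le (hF.mono.measurable.comp measurable_fst) measurable_snd).inter
      (measurableSet_lt measurable_snd (hG.mono.measurable.comp measurable_fst))
  calc ∫⁻ u, ENNReal.ofReal (cdfFlip F u - cdfFlip G u)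
      = ∫⁻ u, volume ((fun x => (x, u)) ⁻¹' A) :=
        lintegral_congr fun u => (hF.volume_setOf_le_lt hG u).symm
    _ = volume.prod volume A := (Measure.prod_apply_symm hA).symm
    _ = ∫⁻ x, volume (Prod.mk x ⁻¹' A) := Measure.prod_apply hA
    _ = ∫⁻ x, ENNReal.ofReal (G x - F x) :=
        lintegral_congr fun x => Real.volume_Ico (a := F x) (b := G x)

theorem lintegral_ofReal_abs_sub_cdfFlip (hF : IsCDF01 F) (hG : IsCDF01 G) :
    ∫⁻ u, ENNReal.ofReal |cdfFlip F u - cdfFlip G u| = ∫⁻ x, ENNReal.ofReal |F x - G x| := by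
  simp_rw [ENNReal.ofReal_abs_sub]
  rw [lintegral_add_left, lintegral_add_left, hF.lintegral_ofReal_sub_cdfFlip hG,
    hG.lintegral_ofReal_sub_cdfFlip hF, add_comm]
  · exact (hF.mono.measurable.sub hG.mono.measurable).ennreal_ofReal
  · exact (hF.flip.mono.measurable.sub hG.flip.mono.measurable).ennreal_ofReal

theorem intervalIntegral_abs_sub_eq_lintegral (hF : IsCDF01 F) (hG : IsCDF01 G) :
    ∫ x in (0 : ℝ)..1, |F x - G x| = (∫⁻ x, ENNReal.ofReal |F x - G x|).toReal := by
  have hzero : ∀ x ∉ Icc (0 : ℝ) 1, |F x - G x| = 0 := fun x hx => by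
    rcases not_and_or.1 hx with hx0 | hx1
    · rw [hF.eq_zero_of_neg x (not_le.1 hx0), hG.eq_zero_of_neg x (not_le.1 hx0), sub_self,
        abs_zero]
    · rw [hF.eq_one_of_one_le x (not_le.1 hx1).le, hG.eq_one_of_one_le x (not_le.1 hx1).le,
        sub_self, abs_zero]
  rw [intervalIntegral.integral_of_le zero_le_one, ← integral_Icc_eq_integral_Ioc,
    setIntegral_eq_integral_of_forall_compl_eq_zero hzero]
  exact integral_eq_lintegral_of_nonneg_ae (ae_of_all _ fun x => abs_nonneg _)
    (hF.mono.measurable.sub hG.mono.measurable).abs.aestronglyMeasurable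

theorem intervalIntegral_abs_sub_cdfFlip (hF : IsCDF01 F) (hG : IsCDF01 G) :
    ∫ x in (0 : ℝ)..1, |cdfFlip F x - cdfFlip G x| = ∫ x in (0 : ℝ)..1, |F x - G x| := by
  rw [hF.flip.intervalIntegral_abs_sub_eq_lintegral hG.flip,
    hF.intervalIntegral_abs_sub_eq_lintegral hG, hF.lintegral_ofReal_abs_sub_cdfFlip hG]

def measure (hF : IsCDF01 F) : Measure ℝ :=
  (⟨F, hF.mono, hF.continuousWithinAt_Ici⟩ : StieltjesFunction ℝ).measure

theorem measure_mem_P01 (hF : IsCDF01 F) : hF.measure ∈ P01 := by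
  refine ⟨⟨?_⟩, ?_⟩
  · rw [measure, StieltjesFunction.measure_univ _ hF.tendsto_atBot hF.tendsto_atTop]
    simp
  · rw [measure, StieltjesFunction.measure_Icc]
    simp [hF.leftLim_zero, hF.eq_one_of_one_le]

theorem cdf_measure (hF : IsCDF01 F) : cdf hF.measure = F :=
  congrArg (⇑) (cdf_measure_stieltjesFunction _ hF.tendsto_atBot hF.tendsto_atTop)

end IsCDF01

section Measures

variable {μ ν : Measure ℝ}

theorem cdfI_eq_cdf (hμ : μ ∈ P01) : cdfI μ = cdf μ := by
  have := hμ.1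
  have hnull : μ (Icc 0 1)ᶜ = 0 := (prob_compl_eq_zero_iff measurableSet_Icc).2 hμ.2
  funext x
  rw [cdfI, cdf_eq_real, measureReal_def, ← measure_inter_conull hnull,
    ← measure_inter_conull (s := Iic x) hnull]
  congr 2
  ext y
  simp only [mem_inter_iff, mem_Icc, mem_Iic]
  tauto

theorem isCDF01_cdfI (hμ : μ ∈ P01) : IsCDF01 (cdfI μ) where
  mono := cdfI_eq_cdf hμ ▸ monotone_cdf μ
  continuousWithinAt_Ici := cdfI_eq_cdf hμ ▸ (cdf μ).right_continuous
  eq_zero_of_neg x hx := by simp [cdfI, Icc_eq_empty_of_lt hx]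
  eq_one_of_one_le x hx := by
    have := hμ.1
    have h1 : μ (Icc 0 x) = 1 :=
      le_antisymm prob_le_one (hμ.2 ▸ measure_mono (Icc_subset_Icc le_rfl hx))
    simp [cdfI, h1]

theorem IsCDF01.cdfI_measure {F : ℝ → ℝ} (hF : IsCDF01 F) : cdfI hF.measure = F :=
  (cdfI_eq_cdf hF.measure_mem_P01).trans hF.cdf_measure

theorem eq_of_eqOn_cdfI (hμ : μ ∈ P01) (hν : ν ∈ P01) (h : EqOn (cdfI μ) (cdfI ν) (Ico 0 1)) :
    μ = ν := by
  have := hμ.1; have := hν.1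
  refine Measure.eq_of_cdf μ ν (StieltjesFunction.ext fun x => ?_)
  rw [← cdfI_eq_cdf hμ, ← cdfI_eq_cdf hν, (isCDF01_cdfI hμ).ext_of_eqOn (isCDF01_cdfI hν) h]

open scoped Classical in
def flipMeasure (μ : Measure ℝ) : Measure ℝ :=
  if hμ : μ ∈ P01 then (isCDF01_cdfI hμ).flip.measure else μ

theorem flipMeasure_mem_P01 (hμ : μ ∈ P01) : flipMeasure μ ∈ P01 := by
  rw [flipMeasure, dif_pos hμ]
  exact IsCDF01.measure_mem_P01 _

theorem cdfI_flipMeasure (hμ : μ ∈ P01) : cdfI (flipMeasure μ) = cdfFlip (cdfI μ) := by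
  rw [flipMeasure, dif_pos hμ, IsCDF01.cdfI_measure]

theorem flipMeasure_flipMeasure (hμ : μ ∈ P01) : flipMeasure (flipMeasure μ) = μ :=
  eq_of_eqOn_cdfI (flipMeasure_mem_P01 (flipMeasure_mem_P01 hμ)) hμ fun x _ => by
    rw [cdfI_flipMeasure (flipMeasure_mem_P01 hμ), cdfI_flipMeasure hμ,
      (isCDF01_cdfI hμ).cdfFlip_cdfFlip]

theorem dW1I_flipMeasure (hμ : μ ∈ P01) (hν : ν ∈ P01) :
    dW1I (flipMeasure μ) (flipMeasure ν) = dW1I μ ν := by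
  simp only [dW1I, cdfI_flipMeasure hμ, cdfI_flipMeasure hν]
  exact (isCDF01_cdfI hμ).intervalIntegral_abs_sub_cdfFlip (isCDF01_cdfI hν)

theorem cdfI_flipMeasure_of_lt_one (hμ : μ ∈ P01) {x : ℝ} (hx : x < 1) :
    cdfI (flipMeasure μ) x = quantI μ x := by
  rw [cdfI_flipMeasure hμ, cdfFlip_of_lt_one hx, quantI]

variable {t x : ℝ}

theorem dirac_mem_P01 (ht : t ∈ Icc (0 : ℝ) 1) : Measure.dirac t ∈ P01 :=
  ⟨inferInstance, Measure.dirac_apply_of_mem ht⟩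

theorem cdfI_dirac (ht : 0 ≤ t) (x : ℝ) : cdfI (Measure.dirac t) x = if t ≤ x then 1 else 0 := by
  split_ifs with h <;> simp [cdfI, Measure.dirac_apply', ht, h]

theorem quantI_dirac (ht : 0 ≤ t) (hx : x ∈ Ico (0 : ℝ) 1) : quantI (Measure.dirac t) x = t := by
  have hset : {y | cdfI (Measure.dirac t) y ≤ x} = Iio t := by
    ext y
    change cdfI _ y ≤ x ↔ y < t
    rw [cdfI_dirac ht]
    split_ifs with h
    · exact iff_of_false (not_le.2 hx.2) (not_lt.2 h)
    · exact iff_of_true hx.1 (not_le.1 h)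
  rw [quantI, hset, csSup_Iio]

def twoPointMeasure (t : ℝ) : Measure ℝ :=
  ENNReal.ofReal t • Measure.dirac 0 + ENNReal.ofReal (1 - t) • Measure.dirac 1

theorem twoPointMeasure_mem_P01 (ht : t ∈ Icc (0 : ℝ) 1) : twoPointMeasure t ∈ P01 := by
  have hsum : ENNReal.ofReal t + ENNReal.ofReal (1 - t) = 1 := by
    rw [← ENNReal.ofReal_add ht.1 (sub_nonneg.2 ht.2), add_sub_cancel, ENNReal.ofReal_one]
  refine ⟨⟨?_⟩, ?_⟩ <;> simp [twoPointMeasure, hsum]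

theorem cdfI_twoPointMeasure (ht : 0 ≤ t) (hx : x ∈ Ico (0 : ℝ) 1) :
    cdfI (twoPointMeasure t) x = t := by
  simp [twoPointMeasure, cdfI, Measure.dirac_apply', hx.1, hx.2, ht]

theorem flipMeasure_dirac (ht : t ∈ Icc (0 : ℝ) 1) :
    flipMeasure (Measure.dirac t) = twoPointMeasure t :=
  eq_of_eqOn_cdfI (flipMeasure_mem_P01 (dirac_mem_P01 ht)) (twoPointMeasure_mem_P01 ht)
    fun x hx => by
      rw [cdfI_flipMeasure_of_lt_one (dirac_mem_P01 ht) hx.2, quantI_dirac ht.1 hx,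
        cdfI_twoPointMeasure ht.1 hx]

theorem flipMeasure_dirac_half_ne_dirac (s : ℝ) :
    flipMeasure (Measure.dirac (1 / 2 : ℝ)) ≠ Measure.dirac s := by
  intro h
  have h0 := cdfI_flipMeasure_of_lt_one (dirac_mem_P01 (t := 1 / 2) ⟨by norm_num, by norm_num⟩)
    zero_lt_one
  rw [h, quantI_dirac (by norm_num) ⟨le_rfl, zero_lt_one⟩] at h0
  by_cases hs : s = 0 <;> simp [cdfI, Measure.dirac_apply', hs] at h0

end Measures

/-- The flip operation `j` on `W₁([0,1])`, defined by `F_{j(μ)} = F_μ⁻¹`, is a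
well-defined surjective isometry of order two, with `j(δ_t) = t·δ₀ + (1-t)·δ₁`;
in particular `j` does not map all Dirac masses to Dirac masses. -/
theorem flip_isometry :
    ∃ j : Measure ℝ → Measure ℝ,
      (∀ μ ∈ P01, j μ ∈ P01 ∧ ∀ x ∈ Set.Ico (0:ℝ) 1, cdfI (j μ) x = quantI μ x) ∧
      Set.SurjOn j P01 P01 ∧
      (∀ μ ∈ P01, ∀ ν ∈ P01, dW1I (j μ) (j ν) = dW1I μ ν) ∧
      (∀ μ ∈ P01, j (j μ) = μ) ∧
      (∀ t ∈ Set.Icc (0:ℝ) 1,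
        j (Measure.dirac t)
          = ENNReal.ofReal t • Measure.dirac (0:ℝ) + ENNReal.ofReal (1 - t) • Measure.dirac (1:ℝ)) ∧
      ¬ (∀ t ∈ Set.Icc (0:ℝ) 1, ∃ s : ℝ, j (Measure.dirac t) = Measure.dirac s) := by
  refine ⟨flipMeasure,
    fun μ hμ => ⟨flipMeasure_mem_P01 hμ, fun x hx => cdfI_flipMeasure_of_lt_one hμ hx.2⟩,
    fun ν hν => ⟨flipMeasure ν, flipMeasure_mem_P01 hν, flipMeasure_flipMeasure hν⟩,
    fun μ hμ ν hν => dW1I_flipMeasure hμ hν,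
    fun μ hμ => flipMeasure_flipMeasure hμ,
    fun t ht => flipMeasure_dirac ht,
    fun h => ?_⟩
  obtain ⟨s, hs⟩ := h (1 / 2) ⟨by norm_num, by norm_num⟩
  exact flipMeasure_dirac_half_ne_dirac s hs
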